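/- arXiv:1608.02564 — 2 statements merged into one kernel-verified Lean document; each statement's English description precedes it below -/
import Mathlib

section
/- Let n be an odd positive integer and let x ∈ ℤ⁴ be a (−1)-vector with B(v₀, x) = n. Then for every (a,b) ∈ ℤ² with 2·|x₂ − n·a| ≤ n and 2·|x₃ − n·b| ≤ n, one has B(x, α_{(a,b)}) < 0. (Hence every (−1)-vector occurring at an odd step n ≥ 3 of Vinberg's algorithm is rejected, and no vectors beyond the α_{(a,b)} are accepted.) -/
/-- The Gram form of the hyperbolic lattice `ℤ^{1,1} ⊕ ℤ²(−2)` attached to the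
odd 0-cusp of type 1. -/
def B (x y : Fin 4 → ℤ) : ℤ :=
  x 0 * y 0 - x 1 * y 1 - 2 * x 2 * y 2 - 2 * x 3 * y 3

/-- The initial vector of Vinberg's algorithm, with `B v₀ x = x 0 + x 1`. -/
def v₀ : Fin 4 → ℤ := ![1, -1, 0, 0]

/-- The vectors produced at step 1 of Vinberg's algorithm. -/
def alpha (a b : ℤ) : Fin 4 → ℤ := ![a ^ 2 + b ^ 2, 1 - a ^ 2 - b ^ 2, a, b]

/-- Let `n` be an odd positive integer and `x ∈ ℤ⁴` a `(−1)`-vector with `B(v₀,x) = n`.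
Then for every `(a,b) ∈ ℤ²` with `2|x₂ − na| ≤ n` and `2|x₃ − nb| ≤ n` one has
`B(x, α_{(a,b)}) < 0`; hence every `(−1)`-vector occurring at an odd step `n ≥ 3` of
Vinberg's algorithm is rejected. -/
theorem stmt_4 (n : ℤ) (hodd : Odd n) (hpos : 0 < n) (x : Fin 4 → ℤ)
    (hx : B x x = -1) (hn : B v₀ x = n) :
    ∀ a b : ℤ, 2 * |x 2 - n * a| ≤ n → 2 * |x 3 - n * b| ≤ n →
      B x (alpha a b) < 0 := by
  intro a b ha hb
  simp only [B, v₀, alpha, Matrix.cons_val_zero, Matrix.cons_val_one, Matrix.head_cons,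
    Matrix.cons_val_two, Matrix.tail_cons, Matrix.cons_val_three] at hx hn ⊢
  have h0 : x 0 = n - x 1 := by linarith
  have h2 : 4 * (x 2 - n * a) ^ 2 ≤ n ^ 2 := by
    nlinarith [sq_abs (x 2 - n * a), abs_nonneg (x 2 - n * a)]
  have h3 : 4 * (x 3 - n * b) ^ 2 ≤ n ^ 2 := by
    nlinarith [sq_abs (x 3 - n * b), abs_nonneg (x 3 - n * b)]
  rw [h0] at hx
  have key : 2 * n * (x 0 * (a ^ 2 + b ^ 2) - x 1 * (1 - a ^ 2 - b ^ 2)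
      - 2 * x 2 * a - 2 * x 3 * b)
      = 2 * (x 2 - n * a) ^ 2 + 2 * (x 3 - n * b) ^ 2 - n ^ 2 - 1 := by
    rw [h0]; linear_combination hx
  have hle : 8 * n * (x 0 * (a ^ 2 + b ^ 2) - x 1 * (1 - a ^ 2 - b ^ 2)
      - 2 * x 2 * a - 2 * x 3 * b) ≤ -4 := by linarith
  by_contra h
  push_neg at h
  nlinarith [mul_nonneg hpos.le h]
end

section
/- Let K be a field of characteristic ≠ 2 and let c : {0,1}³ → K with c_{ijk} ≠ 0 for all (i,j,k). Let ι be the involution of ℙ¹(K) × ℙ¹(K) × ℙ¹(K) sending ([x₀:x₁],[y₀:y₁],[z₀:z₁]) to ([x₀:−x₁],[y₀:−y₁],[z₀:−z₁]). If p is a point of (ℙ¹)³ whose homogeneous coordinates (x₀,x₁,y₀,y₁,z₀,z₁) satisfy Σ_{i,j,k ∈ {0,1}} c_{ijk} x_i² y_j² z_k² = 0, then ι(p) ≠ p. That is, ι has no fixed points on the surface S̃ = V(Σ c_{ijk} X_i²Y_j²Z_k²). -/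
/-! In characteristic `≠ 2`, a fixed point `[x₀ : x₁]` of `[x₀ : x₁] ↦ [x₀ : -x₁]` has exactly one
nonzero coordinate: a scalar `a` with `a x₀ = x₀` and `a x₁ = -x₁` gives `2 x₀ x₁ = 0`. So at a
fixed point of `ι` the defining sum collapses to a single monomial `c_{ijk} x_i² y_j² z_k²`,
which is nonzero. -/

open Projectivization

lemma negSnd_ne_zero {K : Type*} [Field K] {x : Fin 2 → K} (hx : x ≠ 0) :
    (![x 0, -x 1] : Fin 2 → K) ≠ 0 := by
  intro h
  apply hx
  funext i
  fin_cases i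
  · simpa using congrFun h 0
  · have h1 := congrFun h 1
    simp only [Matrix.cons_val_one, Matrix.head_cons, Pi.zero_apply, neg_eq_zero] at h1
    simpa using h1

lemma mul_eq_zero_of_mk_negSnd_eq {K : Type*} [Field K] (hchar : (2 : K) ≠ 0) {x : Fin 2 → K}
    (hx : x ≠ 0) (h : mk K ![x 0, -x 1] (negSnd_ne_zero hx) = mk K x hx) : x 0 * x 1 = 0 := by
  obtain ⟨a, ha⟩ := (mk_eq_mk_iff K _ _ _ _).1 h
  have h0 : (a : K) * x 0 = x 0 := by simpa [Units.smul_def] using congrFun ha 0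
  have h1 : (a : K) * x 1 = -x 1 := by simpa [Units.smul_def] using congrFun ha 1
  have h2 : 2 * (x 0 * x 1) = 0 := by linear_combination x 0 * h1 - x 1 * h0
  exact (mul_eq_zero.1 h2).resolve_left hchar

lemma exists_ne_zero_forall_ne_eq_zero {M₀ : Type*} [MulZeroClass M₀] [NoZeroDivisors M₀]
    {x : Fin 2 → M₀} (hx : x ≠ 0) (h : x 0 * x 1 = 0) :
    ∃ i, x i ≠ 0 ∧ ∀ j, j ≠ i → x j = 0 := by
  by_cases h0 : x 0 = 0
  · refine ⟨1, fun h1 => hx (funext fun i => ?_), fun j hj => ?_⟩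
    · fin_cases i <;> assumption
    · fin_cases j <;> simp_all
  · refine ⟨0, h0, fun j hj => ?_⟩
    fin_cases j
    · exact absurd rfl hj
    · exact (mul_eq_zero.1 h).resolve_left h0

lemma sum_mul_sq_eq_of_forall_ne_eq_zero {ι R : Type*} [Fintype ι] [CommRing R]
    (c : ι → ι → ι → R) {x y z : ι → R} {a b d : ι}
    (hx : ∀ i, i ≠ a → x i = 0) (hy : ∀ j, j ≠ b → y j = 0) (hz : ∀ k, k ≠ d → z k = 0) :
    ∑ i, ∑ j, ∑ k, c i j k * x i ^ 2 * y j ^ 2 * z k ^ 2 =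
      c a b d * x a ^ 2 * y b ^ 2 * z d ^ 2 := by
  rw [Fintype.sum_eq_single a fun i hi => by simp [hx i hi],
    Fintype.sum_eq_single b fun j hj => by simp [hy j hj],
    Fintype.sum_eq_single d fun k hk => by simp [hz k hk]]

/-- Let `K` be a field of characteristic `≠ 2` and `c : {0,1}³ → K` with all
`c_{ijk} ≠ 0`. The involution `ι` of `(ℙ¹)³` sending
`([x₀:x₁],[y₀:y₁],[z₀:z₁])` to `([x₀:−x₁],[y₀:−y₁],[z₀:−z₁])` has no fixed points on
the surface `S̃ = V(Σ c_{ijk} X_i²Y_j²Z_k²)`: if the homogeneous coordinates of a point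
`p` of `(ℙ¹)³` satisfy `Σ c_{ijk} x_i² y_j² z_k² = 0`, then `ι(p) ≠ p`. -/
theorem stmt_10 {K : Type*} [Field K] (hchar : (2 : K) ≠ 0)
    (c : Fin 2 → Fin 2 → Fin 2 → K) (hc : ∀ i j k, c i j k ≠ 0)
    (x y z : Fin 2 → K) (hx : x ≠ 0) (hy : y ≠ 0) (hz : z ≠ 0)
    (hp : ∑ i, ∑ j, ∑ k, c i j k * x i ^ 2 * y j ^ 2 * z k ^ 2 = 0) :
    ¬ (Projectivization.mk K ![x 0, -x 1] (negSnd_ne_zero hx) = Projectivization.mk K x hx ∧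
       Projectivization.mk K ![y 0, -y 1] (negSnd_ne_zero hy) = Projectivization.mk K y hy ∧
       Projectivization.mk K ![z 0, -z 1] (negSnd_ne_zero hz) = Projectivization.mk K z hz) := by
  rintro ⟨hfx, hfy, hfz⟩
  obtain ⟨a, hxa, hx'⟩ :=
    exists_ne_zero_forall_ne_eq_zero hx (mul_eq_zero_of_mk_negSnd_eq hchar hx hfx)
  obtain ⟨b, hyb, hy'⟩ :=
    exists_ne_zero_forall_ne_eq_zero hy (mul_eq_zero_of_mk_negSnd_eq hchar hy hfy)
  obtain ⟨d, hzd, hz'⟩ :=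
    exists_ne_zero_forall_ne_eq_zero hz (mul_eq_zero_of_mk_negSnd_eq hchar hz hfz)
  rw [sum_mul_sq_eq_of_forall_ne_eq_zero c hx' hy' hz'] at hp
  exact mul_ne_zero (mul_ne_zero (mul_ne_zero (hc a b d) (pow_ne_zero 2 hxa))
    (pow_ne_zero 2 hyb)) (pow_ne_zero 2 hzd) hp
end
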